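/- Let (X, cl) be a finitary matroid with rank rk and δ a quasi-endomorphism. For a ∈ X and B ⊆ X: a ∉ cl^δ(B) if and only if the sequence (δⁱa)_{i<ω} is independent over cl(J^∞(B)), i.e. for every n, δⁿa ∉ cl({a, δa, …, δ^{n−1}a} ∪ J^∞(B)). -/

import Mathlib

/-- A finitary matroid (pregeometry) on a type `X`, given by a closure operator. -/
structure Pregeometry (X : Type*) where
  cl : Set X → Set X
  subset_cl : ∀ A : Set X, A ⊆ cl A
  mono : ∀ A B : Set X, A ⊆ B → cl A ⊆ cl B
  cl_cl : ∀ A : Set X, cl (cl A) = cl A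
  finitary : ∀ (A : Set X) (a : X), a ∈ cl A → ∃ F : Finset X, ↑F ⊆ A ∧ a ∈ cl ↑F
  exchange : ∀ (a b : X) (A : Set X), a ∈ cl (A ∪ {b}) → a ∉ cl A → b ∈ cl (A ∪ {a})

/-- `S` is independent over `B` with respect to a closure operator. -/
def clIndep {X : Type*} (cl : Set X → Set X) (B S : Set X) : Prop :=
  ∀ s ∈ S, s ∉ cl (B ∪ (S \ {s}))

/-- The rank of `A` over `B` with respect to a closure operator: the supremum of the
cardinalities of subsets of `A` independent over `B`. -/
noncomputable def clRank {X : Type*} (cl : Set X → Set X) (A B : Set X) : Cardinal :=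
  ⨆ S : {S : Set X // S ⊆ A ∧ clIndep cl B S}, Cardinal.mk S.1

/-- The set of all iterated images `δⁱ a` for `a ∈ A`, `i < ω` (the infinite jet). -/
def Jinf {X : Type*} (δ : X → X) (A : Set X) : Set X :=
  ⋃ a ∈ A, Set.range fun i : ℕ => δ^[i] a

/-- The jet `{δⁱ a : a ∈ A, i ≤ n}`. -/
def Jle {X : Type*} (δ : X → X) (A : Set X) (n : ℕ) : Set X :=
  ⋃ a ∈ A, (fun i : ℕ => δ^[i] a) '' {i | i ≤ n}

/-- The jet `{δⁱ a : a ∈ A, i < n}` (so `Jlt δ A 0 = ∅`, playing the role of `J^{-1}`). -/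
def Jlt {X : Type*} (δ : X → X) (A : Set X) (n : ℕ) : Set X :=
  ⋃ a ∈ A, (fun i : ℕ => δ^[i] a) '' {i | i < n}

/-- `δ` is a quasi-endomorphism of the pregeometry `P`:
`rk(δA | A ∪ B ∪ δB) ≤ rk(A | B)` for all `A, B`. -/
def IsQuasiEndo {X : Type*} (P : Pregeometry X) (δ : X → X) : Prop :=
  ∀ A B : Set X, clRank P.cl (δ '' A) (A ∪ B ∪ δ '' B) ≤ clRank P.cl A B

/-- The `δ`-closure operator: `a ∈ cl^δ(B)` iff `rk(J^∞(a) | J^∞(B))` is finite. -/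
noncomputable def clDelta {X : Type*} (P : Pregeometry X) (δ : X → X) : Set X → Set X :=
  fun B => {a | clRank P.cl (Jinf δ {a}) (Jinf δ B) < Cardinal.aleph0}

/-! If `δⁿ a` depends on its predecessors over `J^∞(B)`, the quasi-endomorphism axiom,
applied to a single dependent element, carries this dependence to every later `δᵐ a`; so
`J^∞(a)` lies in the closure of `n` elements over `J^∞(B)`, and Steinitz exchange bounds its
rank by `n`. If no `δⁿ a` depends on its predecessors, exchange shows that the whole sequence
`(δⁱ a)` is independent over `J^∞(B)`, and it is injective, so the rank is infinite. -/

open Cardinal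

namespace Pregeometry

variable {X : Type*} (P : Pregeometry X)

theorem cl_subset_cl_of_subset_cl {A D : Set X} (h : A ⊆ P.cl D) : P.cl A ⊆ P.cl D :=
  P.cl_cl D ▸ P.mono A (P.cl D) h

theorem clIndep_of_subset {C S T : Set X} (hS : clIndep P.cl C S) (hTS : T ⊆ S) :
    clIndep P.cl C T := fun t ht hcl =>
  hS t (hTS ht) (P.mono _ _ (Set.union_subset_union_right _ (Set.sdiff_subset_sdiff_left hTS)) hcl)

theorem exists_mem_cl_erase_union_insert [DecidableEq X] {s : X} {C : Set X} (F : Finset X)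
    (hs : s ∈ P.cl (↑F ∪ C)) (hsC : s ∉ P.cl C) :
    ∃ f ∈ F, f ∈ P.cl (↑(F.erase f) ∪ insert s C) := by
  induction F using Finset.induction_on with
  | empty => simp_all
  | @insert g F hgF ih =>
    by_cases hsF : s ∈ P.cl (↑F ∪ C)
    · obtain ⟨f, hfF, hf⟩ := ih hsF
      refine ⟨f, Finset.mem_insert_of_mem hfF, P.mono _ _ ?_ hf⟩
      gcongr
      exact Finset.subset_insert g F
    · have hs' : s ∈ P.cl ((↑F ∪ C) ∪ {g}) := by
        rwa [Set.union_singleton, ← Set.insert_union, ← Finset.coe_insert]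
      refine ⟨g, Finset.mem_insert_self g F, ?_⟩
      rw [Finset.erase_insert hgF]
      refine P.mono _ _ ?_ (P.exchange s g _ hs' hsF)
      intro x hx
      simp only [Set.mem_union, Set.mem_insert_iff, Set.mem_singleton_iff] at hx ⊢
      tauto

theorem card_le_card_of_clIndep_of_subset_cl [DecidableEq X] (S : Finset X) {F : Finset X}
    {C : Set X} (hS : clIndep P.cl C S) (hSF : ↑S ⊆ P.cl (↑F ∪ C)) : S.card ≤ F.card := by
  induction S using Finset.induction_on generalizing C F with
  | empty => simp
  | @insert s S hsS ih =>
    have hsC : s ∉ P.cl C := fun h => hS s (by simp) (P.mono _ _ Set.subset_union_left h)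
    obtain ⟨f, hfF, hf⟩ := P.exists_mem_cl_erase_union_insert F (hSF (by simp)) hsC
    have hspan : ↑F ∪ C ⊆ P.cl (↑(F.erase f) ∪ insert s C) := by
      rintro x (hx | hx)
      · by_cases hxf : x = f
        · exact hxf ▸ hf
        · exact P.subset_cl _ (Or.inl (Finset.mem_erase.mpr ⟨hxf, hx⟩))
      · exact P.subset_cl _ (Or.inr (Set.mem_insert_of_mem s hx))
    have hSind : clIndep P.cl (insert s C) S := by
      intro t ht hcl
      have hts : t ≠ s := fun h => hsS (h ▸ ht)
      refine hS t (by simp [ht]) (P.mono _ _ ?_ hcl)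
      rw [← Set.union_singleton, Set.union_assoc]
      gcongr
      rintro x (rfl | ⟨hxS, hxt⟩)
      · exact ⟨by simp, hts.symm⟩
      · exact ⟨by simp [hxS], hxt⟩
    have hle := ih hSind fun x hx =>
      P.cl_subset_cl_of_subset_cl hspan (hSF (Finset.mem_coe.mpr (Finset.mem_insert_of_mem hx)))
    rw [Finset.card_erase_of_mem hfF] at hle
    rw [Finset.card_insert_of_notMem hsS]
    have := Finset.card_pos.mpr ⟨f, hfF⟩
    omega

end Pregeometry

section clRank

variable {X : Type*}

theorem le_clRank (cl : Set X → Set X) {A B S : Set X} (hSA : S ⊆ A) (hS : clIndep cl B S) :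
    #S ≤ clRank cl A B :=
  le_ciSup bddAbove_of_small (⟨S, hSA, hS⟩ : {S : Set X // S ⊆ A ∧ clIndep cl B S})

theorem clRank_le (cl : Set X → Set X) {A B : Set X} {c : Cardinal}
    (h : ∀ S ⊆ A, clIndep cl B S → #S ≤ c) : clRank cl A B ≤ c :=
  have : Nonempty {S : Set X // S ⊆ A ∧ clIndep cl B S} :=
    ⟨⟨∅, Set.empty_subset A, fun _ hs => hs.elim⟩⟩
  ciSup_le fun S => h S.1 S.2.1 S.2.2

theorem mem_cl_of_clRank_le_zero (cl : Set X → Set X) {A B : Set X} {x : X}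
    (h : clRank cl A B ≤ 0) (hx : x ∈ A) : x ∈ cl B := by
  by_contra hxB
  have hind : clIndep cl B {x} := by simpa [clIndep] using hxB
  simpa using (le_clRank cl (Set.singleton_subset_iff.mpr hx) hind).trans h

theorem Pregeometry.clRank_le_card_of_subset_cl (P : Pregeometry X) {A C : Set X}
    {F : Finset X} (h : A ⊆ P.cl (↑F ∪ C)) : clRank P.cl A C ≤ F.card := by
  classical
  refine clRank_le _ fun S hSA hS => le_of_not_gt fun hlt => ?_
  obtain ⟨T, hTS, hT⟩ := Cardinal.le_mk_iff_exists_subset.mp (Cardinal.add_one_le_of_lt hlt)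
  obtain ⟨T, rfl, hcard⟩ := Cardinal.mk_set_eq_nat_iff_finset.mp (by exact_mod_cast hT)
  have := P.card_le_card_of_clIndep_of_subset_cl T (P.clIndep_of_subset hS hTS)
    (hTS.trans (hSA.trans h))
  omega

end clRank

namespace Pregeometry

variable {X : Type*} (P : Pregeometry X) {f : ℕ → X} {C : Set X}

theorem injective_of_forall_notMem_cl (H : ∀ n, f n ∉ P.cl (f '' Set.Iio n ∪ C)) :
    f.Injective :=
  .of_lt_imp_ne fun m n hmn heq =>
    H n (P.subset_cl _ (Or.inl ⟨m, hmn, heq⟩))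

theorem notMem_cl_image_union_of_forall_notMem_cl
    (H : ∀ n, f n ∉ P.cl (f '' Set.Iio n ∪ C)) {n : ℕ} (G : Finset ℕ) (hnG : n ∉ G) :
    f n ∉ P.cl (f '' G ∪ C) := by
  induction G using Finset.induction_on_max with
  | empty => simpa using fun h => H n (P.mono _ _ Set.subset_union_right h)
  | insert m G hGm ih =>
    obtain ⟨hnm, hnG⟩ : n ≠ m ∧ n ∉ G := by simpa using hnG
    intro hn
    rw [Finset.coe_insert, Set.image_insert_eq, Set.insert_union, ← Set.union_singleton] at hn
    rcases hnm.lt_or_gt with hnm | hmn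
    · -- exchange `f n` for `f m`: `f m` then lies in the closure of earlier terms
      refine H m (P.mono _ _ ?_ (P.exchange _ _ _ hn (ih hnG)))
      rintro x ((⟨i, hi, rfl⟩ | hx) | rfl)
      · exact Or.inl ⟨i, hGm i hi, rfl⟩
      · exact Or.inr hx
      · exact Or.inl ⟨n, hnm, rfl⟩
    · refine H n (P.mono _ _ ?_ hn)
      rintro x ((⟨i, hi, rfl⟩ | hx) | rfl)
      · exact Or.inl ⟨i, (hGm i hi).trans hmn, rfl⟩
      · exact Or.inr hx
      · exact Or.inl ⟨m, hmn, rfl⟩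

theorem clIndep_range_of_forall_notMem_cl (H : ∀ n, f n ∉ P.cl (f '' Set.Iio n ∪ C)) :
    clIndep P.cl C (Set.range f) := by
  classical
  rintro _ ⟨n, rfl⟩ hn
  obtain ⟨F, hFsub, hnF⟩ := P.finitary _ _ hn
  have hinj := P.injective_of_forall_notMem_cl H
  refine P.notMem_cl_image_union_of_forall_notMem_cl H
    ((F.preimage f hinj.injOn).erase n) (Finset.notMem_erase n _) (P.mono _ _ ?_ hnF)
  intro x hx
  rcases hFsub hx with hxC | ⟨⟨i, rfl⟩, hin⟩
  · exact Or.inr hxC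
  · refine Or.inl ⟨i, ?_, rfl⟩
    simpa [hx] using fun h : i = n => hin (h ▸ rfl)

end Pregeometry

section Jets

variable {X : Type*} (δ : X → X)

theorem Jinf_singleton (a : X) : Jinf δ {a} = Set.range fun i => δ^[i] a := by
  simp [Jinf]

theorem Jlt_singleton (a : X) (n : ℕ) :
    Jlt δ {a} n = (fun i => δ^[i] a) '' Set.Iio n := by
  simp [Jlt, Set.Iio]

theorem image_Jinf_subset (B : Set X) : δ '' Jinf δ B ⊆ Jinf δ B := by
  rintro _ ⟨_, hy, rfl⟩
  simp only [Jinf, Set.mem_iUnion, Set.mem_range] at hy ⊢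
  obtain ⟨b, hb, i, rfl⟩ := hy
  exact ⟨b, hb, i + 1, Function.iterate_succ_apply' δ i b⟩

end Jets

namespace IsQuasiEndo

variable {X : Type*} {P : Pregeometry X} {δ : X → X}

theorem apply_mem_cl (hδ : IsQuasiEndo P δ) {x : X} {A : Set X} (hx : x ∈ P.cl A) :
    δ x ∈ P.cl ({x} ∪ A ∪ δ '' A) := by
  have hrank : clRank P.cl {x} A ≤ 0 := by
    simpa using P.clRank_le_card_of_subset_cl (F := ∅) (by simpa using hx)
  exact mem_cl_of_clRank_le_zero _ ((hδ {x} A).trans hrank) (Set.mem_image_of_mem δ rfl)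

theorem iterate_mem_cl_Jlt_union (hδ : IsQuasiEndo P δ) {a : X} {D : Set X}
    (hD : δ '' D ⊆ D) {n : ℕ} (hn : δ^[n] a ∈ P.cl (Jlt δ {a} n ∪ D)) (m : ℕ) :
    δ^[m] a ∈ P.cl (Jlt δ {a} n ∪ D) := by
  rw [Jlt_singleton] at hn ⊢
  induction m using Nat.strong_induction_on with
  | _ m ih =>
    rcases lt_trichotomy m n with hmn | rfl | hnm
    · exact P.subset_cl _ (Or.inl ⟨m, hmn, rfl⟩)
    · exact hn
    · obtain ⟨k, rfl⟩ : ∃ k, m = k + 1 := Nat.exists_eq_add_one.mpr (by omega)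
      rw [Function.iterate_succ_apply']
      refine P.cl_subset_cl_of_subset_cl ?_ (hδ.apply_mem_cl (ih k (by omega)))
      rintro _ ((rfl | hx) | ⟨y, (⟨i, hi, rfl⟩ | hy), rfl⟩)
      · exact ih k (by omega)
      · exact P.subset_cl _ hx
      · rw [← Function.iterate_succ_apply' δ i a]
        exact ih (i + 1) (by simp only [Set.mem_Iio] at hi; omega)
      · exact P.subset_cl _ (Or.inr (hD ⟨y, hy, rfl⟩))

end IsQuasiEndo

/-- `a ∉ cl^δ(B)` if and only if the sequence `(δⁱ a)` is independent over
`cl(J^∞(B))`: for every `n`, `δⁿ a ∉ cl({a, δa, …, δ^{n-1}a} ∪ J^∞(B))`. -/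
theorem not_mem_clDelta_iff_indep {X : Type*} (P : Pregeometry X) (δ : X → X)
    (hδ : IsQuasiEndo P δ) (a : X) (B : Set X) :
    a ∉ clDelta P δ B ↔
      ∀ n : ℕ, δ^[n] a ∉ P.cl (Jlt δ {a} n ∪ Jinf δ B) := by
  classical
  simp only [clDelta, Set.mem_ofPred_eq, not_lt]
  constructor
  · intro hrank n hn
    rw [Jinf_singleton] at hrank
    have hspan : Set.range (fun i => δ^[i] a) ⊆
        P.cl (↑((Finset.range n).image fun i => δ^[i] a) ∪ Jinf δ B) := by
      rintro _ ⟨m, rfl⟩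
      simpa [Jlt_singleton] using hδ.iterate_mem_cl_Jlt_union (image_Jinf_subset δ B) hn m
    have hfin := (P.clRank_le_card_of_subset_cl hspan).trans_lt natCast_lt_aleph0
    exact hfin.not_ge hrank
  · intro H
    simp only [Jlt_singleton] at H
    calc ℵ₀ ≤ #(Set.range fun i => δ^[i] a) :=
          aleph0_le_mk_iff.mpr (Set.infinite_range_of_injective
            (P.injective_of_forall_notMem_cl H)).to_subtype
      _ ≤ clRank P.cl (Jinf δ {a}) (Jinf δ B) :=
          le_clRank _ (Jinf_singleton δ a).ge (P.clIndep_range_of_forall_notMem_cl H)
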